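/- arXiv:1102.2096 — 4 statements merged into one kernel-verified Lean document; each statement's English description precedes it below -/
import Mathlib

section
/- Let (X, μ, ν, ∗, ◇) be an M-complete non-Archimedean intuitionistic fuzzy metric space, let ψ ∈ Ψ and φ ∈ Φ, and let f : X → X be an intuitionistic fuzzy ψ-φ-contractive mapping. If there exists x ∈ X such that μ(x, f(x), t) > 0 and ν(x, f(x), t) < 1 for all t > 0, then f has a unique fixed point. -/
open Set Filter Topology

/-- An intuitionistic fuzzy metric space `(X, μ, ν, ∗, ◇)`. -/
structure IFMS (X : Type*) where
  mu : X → X → ℝ → ℝ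
  nu : X → X → ℝ → ℝ
  tnorm : ℝ → ℝ → ℝ
  tconorm : ℝ → ℝ → ℝ
  tnorm_mem : ∀ a ∈ Icc (0:ℝ) 1, ∀ b ∈ Icc (0:ℝ) 1, tnorm a b ∈ Icc (0:ℝ) 1
  tnorm_comm : ∀ a b, tnorm a b = tnorm b a
  tnorm_assoc : ∀ a b c, tnorm (tnorm a b) c = tnorm a (tnorm b c)
  tnorm_cont : ContinuousOn (fun p : ℝ × ℝ => tnorm p.1 p.2) (Icc (0:ℝ) 1 ×ˢ Icc (0:ℝ) 1)
  tnorm_one : ∀ a ∈ Icc (0:ℝ) 1, tnorm a 1 = a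
  tnorm_mono : ∀ a ∈ Icc (0:ℝ) 1, ∀ b ∈ Icc (0:ℝ) 1, ∀ c ∈ Icc (0:ℝ) 1, ∀ d ∈ Icc (0:ℝ) 1,
    a ≤ c → b ≤ d → tnorm a b ≤ tnorm c d
  tconorm_mem : ∀ a ∈ Icc (0:ℝ) 1, ∀ b ∈ Icc (0:ℝ) 1, tconorm a b ∈ Icc (0:ℝ) 1
  tconorm_comm : ∀ a b, tconorm a b = tconorm b a
  tconorm_assoc : ∀ a b c, tconorm (tconorm a b) c = tconorm a (tconorm b c)
  tconorm_cont : ContinuousOn (fun p : ℝ × ℝ => tconorm p.1 p.2) (Icc (0:ℝ) 1 ×ˢ Icc (0:ℝ) 1)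
  tconorm_zero : ∀ a ∈ Icc (0:ℝ) 1, tconorm a 0 = a
  tconorm_mono : ∀ a ∈ Icc (0:ℝ) 1, ∀ b ∈ Icc (0:ℝ) 1, ∀ c ∈ Icc (0:ℝ) 1, ∀ d ∈ Icc (0:ℝ) 1,
    a ≤ c → b ≤ d → tconorm a b ≤ tconorm c d
  mu_mem : ∀ x y : X, ∀ t > (0:ℝ), mu x y t ∈ Icc (0:ℝ) 1
  nu_mem : ∀ x y : X, ∀ t > (0:ℝ), nu x y t ∈ Icc (0:ℝ) 1
  sum_le_one : ∀ x y : X, ∀ t > (0:ℝ), mu x y t + nu x y t ≤ 1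
  mu_pos : ∀ x y : X, ∀ t > (0:ℝ), 0 < mu x y t
  mu_eq_one_iff : ∀ x y : X, ∀ t > (0:ℝ), (mu x y t = 1 ↔ x = y)
  mu_symm : ∀ x y : X, ∀ t > (0:ℝ), mu x y t = mu y x t
  mu_tri : ∀ x y z : X, ∀ t > (0:ℝ), ∀ s > (0:ℝ),
    tnorm (mu x y t) (mu y z s) ≤ mu x z (t + s)
  mu_cont : ∀ x y : X, ContinuousOn (fun t => mu x y t) (Ioi (0:ℝ))
  nu_lt_one : ∀ x y : X, ∀ t > (0:ℝ), nu x y t < 1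
  nu_eq_zero_iff : ∀ x y : X, ∀ t > (0:ℝ), (nu x y t = 0 ↔ x = y)
  nu_symm : ∀ x y : X, ∀ t > (0:ℝ), nu x y t = nu y x t
  nu_tri : ∀ x y z : X, ∀ t > (0:ℝ), ∀ s > (0:ℝ),
    nu x z (t + s) ≤ tconorm (nu x y t) (nu y z s)
  nu_cont : ∀ x y : X, ContinuousOn (fun t => nu x y t) (Ioi (0:ℝ))

/-- A non-Archimedean intuitionistic fuzzy metric space. -/
structure NAIFMS (X : Type*) extends IFMS X where
  mu_na : ∀ x y z : X, ∀ t > (0:ℝ), tnorm (mu x y t) (mu y z t) ≤ mu x z t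
  nu_na : ∀ x y z : X, ∀ t > (0:ℝ), nu x z t ≤ tconorm (nu x y t) (nu y z t)

/-- `ψ ∈ Ψ`: continuous, non-decreasing self-map of `[0,1]` with `ψ(t) < t` on `(0,1)`. -/
def MemPsi (ψ : ℝ → ℝ) : Prop :=
  ContinuousOn ψ (Icc (0:ℝ) 1) ∧
  (∀ a ∈ Icc (0:ℝ) 1, ψ a ∈ Icc (0:ℝ) 1) ∧
  (∀ a ∈ Icc (0:ℝ) 1, ∀ b ∈ Icc (0:ℝ) 1, a ≤ b → ψ a ≤ ψ b) ∧
  (∀ a ∈ Ioo (0:ℝ) 1, ψ a < a)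

/-- `φ ∈ Φ`: continuous, non-decreasing self-map of `[0,1]` with `φ(t) > t` on `(0,1)`. -/
def MemPhi (φ : ℝ → ℝ) : Prop :=
  ContinuousOn φ (Icc (0:ℝ) 1) ∧
  (∀ a ∈ Icc (0:ℝ) 1, φ a ∈ Icc (0:ℝ) 1) ∧
  (∀ a ∈ Icc (0:ℝ) 1, ∀ b ∈ Icc (0:ℝ) 1, a ≤ b → φ a ≤ φ b) ∧
  (∀ a ∈ Ioo (0:ℝ) 1, a < φ a)

/-- `f` is an intuitionistic fuzzy `ψ`-`φ`-contractive mapping. -/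
def IsPsiPhiContractive {X : Type*} (S : IFMS X) (ψ φ : ℝ → ℝ) (f : X → X) : Prop :=
  ∀ x y : X, ∀ t > (0:ℝ),
    (0 < S.mu x y t → S.mu x y t ≤ ψ (S.mu (f x) (f y) t)) ∧
    (S.nu x y t < 1 → φ (S.nu (f x) (f y) t) ≤ S.nu x y t)

/-- Convergence of a sequence in an intuitionistic fuzzy metric space. -/
def ConvergesTo {X : Type*} (S : IFMS X) (x : ℕ → X) (y : X) : Prop :=
  ∀ t > (0:ℝ),
    Tendsto (fun n => S.mu (x n) y t) atTop (𝓝 1) ∧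
    Tendsto (fun n => S.nu (x n) y t) atTop (𝓝 0)

/-- M-Cauchy sequence. -/
def MCauchy {X : Type*} (S : IFMS X) (x : ℕ → X) : Prop :=
  ∀ ε ∈ Ioo (0:ℝ) 1, ∀ t > (0:ℝ), ∃ n₀ : ℕ, ∀ m n : ℕ, n₀ ≤ m → n₀ ≤ n →
    1 - ε < S.mu (x n) (x m) t ∧ S.nu (x n) (x m) t < ε

/-- M-completeness: every M-Cauchy sequence converges to some point of `X`. -/
def MComplete {X : Type*} (S : IFMS X) : Prop :=
  ∀ x : ℕ → X, MCauchy S x → ∃ y : X, ConvergesTo S x y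

/-- Compactness: every sequence has a subsequence converging to some point of `X`. -/
def SeqCompact {X : Type*} (S : IFMS X) : Prop :=
  ∀ x : ℕ → X, ∃ g : ℕ → ℕ, StrictMono g ∧ ∃ y : X, ConvergesTo S (x ∘ g) y

private lemma ifms_tendsto_comp_cont {g : ℝ → ℝ} (hg : ContinuousOn g (Icc (0:ℝ) 1))
    {u : ℕ → ℝ} {a : ℝ} (ha : a ∈ Icc (0:ℝ) 1) (hu : ∀ k, u k ∈ Icc (0:ℝ) 1)
    (hua : Tendsto u atTop (𝓝 a)) :
    Tendsto (fun k => g (u k)) atTop (𝓝 (g a)) :=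
  (hg a ha).tendsto.comp
    (tendsto_nhdsWithin_of_tendsto_nhds_of_eventually_within u hua (Eventually.of_forall hu))

private lemma ifms_tendsto_comp_cont2 {T : ℝ → ℝ → ℝ}
    (hT : ContinuousOn (fun p : ℝ × ℝ => T p.1 p.2) (Icc (0:ℝ) 1 ×ˢ Icc (0:ℝ) 1))
    {u v : ℕ → ℝ} {a b : ℝ} (ha : a ∈ Icc (0:ℝ) 1) (hb : b ∈ Icc (0:ℝ) 1)
    (hu : ∀ k, u k ∈ Icc (0:ℝ) 1) (hv : ∀ k, v k ∈ Icc (0:ℝ) 1)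
    (hua : Tendsto u atTop (𝓝 a)) (hvb : Tendsto v atTop (𝓝 b)) :
    Tendsto (fun k => T (u k) (v k)) atTop (𝓝 (T a b)) := by
  have h1 : Tendsto (fun k => (u k, v k)) atTop (𝓝 (a, b)) := hua.prodMk_nhds hvb
  have h2 : Tendsto (fun k => (u k, v k)) atTop (𝓝[Icc (0:ℝ) 1 ×ˢ Icc (0:ℝ) 1] (a, b)) :=
    tendsto_nhdsWithin_of_tendsto_nhds_of_eventually_within _ h1
      (Eventually.of_forall fun k => ⟨hu k, hv k⟩)
  exact (hT (a, b) ⟨ha, hb⟩).tendsto.comp h2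

private lemma ifms_psi_le_self {ψ : ℝ → ℝ} (hψ : MemPsi ψ) : ∀ a ∈ Icc (0:ℝ) 1, ψ a ≤ a := by
  obtain ⟨-, hmem, hmono, hlt⟩ := hψ
  intro a ha
  rcases eq_or_lt_of_le ha.1 with h0 | h0
  · -- a = 0
    subst h0
    have hb : ∀ b ∈ Ioo (0:ℝ) 1, ψ 0 ≤ b := by
      intro b hb
      have h1 : ψ 0 ≤ ψ b :=
        hmono 0 ha b ⟨hb.1.le, hb.2.le⟩ hb.1.le
      exact h1.trans (hlt b hb).le
    by_contra hcon
    push_neg at hcon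
    have h2 : (0:ℝ) < min (ψ 0) 1 / 2 := by
      have := lt_min hcon one_pos
      linarith
    have h3 : min (ψ 0) 1 / 2 < 1 := by
      have : min (ψ 0) 1 ≤ 1 := min_le_right _ _
      linarith
    have h4 := hb _ ⟨h2, h3⟩
    have h5 : min (ψ 0) 1 ≤ ψ 0 := min_le_left _ _
    linarith
  · rcases eq_or_lt_of_le ha.2 with h1 | h1
    · subst h1; exact (hmem 1 (by norm_num)).2
    · exact (hlt a ⟨h0, h1⟩).le

theorem ifms_banach_fixed_point {X : Type*} (S : NAIFMS X) (ψ φ : ℝ → ℝ)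
    (hψ : MemPsi ψ) (hφ : MemPhi φ) (f : X → X)
    (hf : IsPsiPhiContractive S.toIFMS ψ φ f)
    (hcompl : MComplete S.toIFMS)
    (hx : ∃ x : X, ∀ t > (0:ℝ), 0 < S.mu x (f x) t ∧ S.nu x (f x) t < 1) :
    ∃! y : X, f y = y := by
  obtain ⟨x₀, -⟩ := hx
  have hψle := ifms_psi_le_self hψ
  have h01 : (1:ℝ) ∈ Icc (0:ℝ) 1 := ⟨zero_le_one, le_refl 1⟩
  have hcontr : ∀ (u v : X) (t : ℝ), 0 < t → S.mu u v t ≤ ψ (S.mu (f u) (f v) t) :=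
    fun u v t ht => (hf u v t ht).1 (S.mu_pos u v t ht)
  have hmono_mu : ∀ (u v : X) (t : ℝ), 0 < t → S.mu u v t ≤ S.mu (f u) (f v) t :=
    fun u v t ht => (hcontr u v t ht).trans (hψle _ (S.mu_mem (f u) (f v) t ht))
  set x : ℕ → X := fun n => f^[n] x₀ with hxdef
  have hsucc : ∀ n, x (n + 1) = f (x n) := fun n => Function.iterate_succ_apply' f n x₀
  -- Step 1: μ(xₙ, xₙ₊₁, t) → 1
  have step1 : ∀ t : ℝ, 0 < t → Tendsto (fun n => S.mu (x n) (x (n + 1)) t) atTop (𝓝 1) := by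
    intro t ht
    set s : ℕ → ℝ := fun n => S.mu (x n) (x (n + 1)) t with hs
    have hmem : ∀ n, s n ∈ Icc (0:ℝ) 1 := fun n => S.mu_mem _ _ t ht
    have hstep : ∀ n, s n ≤ ψ (s (n + 1)) := by
      intro n
      have h := hcontr (x n) (x (n + 1)) t ht
      rwa [← hsucc n, ← hsucc (n + 1)] at h
    have hmono : Monotone s := monotone_nat_of_le_succ fun n =>
      (hstep n).trans (hψle _ (hmem (n + 1)))
    have hbdd : BddAbove (Set.range s) := ⟨1, by rintro r ⟨n, rfl⟩; exact (hmem n).2⟩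
    set L := ⨆ n, s n with hL
    have htend : Tendsto s atTop (𝓝 L) := tendsto_atTop_ciSup hmono hbdd
    have hL1 : L ≤ 1 := ciSup_le fun n => (hmem n).2
    have hL0 : 0 < L := lt_of_lt_of_le (S.mu_pos (x 0) (x 1) t ht) (le_ciSup hbdd 0)
    have hLeq : L = 1 := by
      by_contra hne
      have hLlt : L < 1 := lt_of_le_of_ne hL1 hne
      have h1 : Tendsto (fun n => ψ (s (n + 1))) atTop (𝓝 (ψ L)) :=
        ifms_tendsto_comp_cont hψ.1 ⟨hL0.le, hL1⟩ (fun k => hmem (k + 1))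
          (htend.comp (tendsto_add_atTop_nat 1))
      have h2 : L ≤ ψ L := le_of_tendsto_of_tendsto' htend h1 hstep
      exact absurd h2 (not_le.mpr (hψ.2.2.2 L ⟨hL0, hLlt⟩))
    rwa [hLeq] at htend
  -- Step 2: the μ-Cauchy condition
  have cauchy_mu : ∀ ε ∈ Ioo (0:ℝ) 1, ∀ t : ℝ, 0 < t →
      ∃ n₀ : ℕ, ∀ m n : ℕ, n₀ ≤ m → n₀ ≤ n → 1 - ε < S.mu (x n) (x m) t := by
    intro ε hε t ht
    by_contra hcon
    push_neg at hcon
    have hbad : ∀ k : ℕ, ∃ n m : ℕ, k ≤ n ∧ n < m ∧ S.mu (x n) (x m) t ≤ 1 - ε := by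
      intro k
      obtain ⟨m, n, hm, hn, hle⟩ := hcon k
      rcases lt_trichotomy n m with h | h | h
      · exact ⟨n, m, hn, h, hle⟩
      · exfalso
        rw [h, (S.mu_eq_one_iff (x m) (x m) t ht).mpr rfl] at hle
        linarith [hε.1]
      · exact ⟨m, n, hm, h, by rwa [S.mu_symm _ _ t ht]⟩
    choose N M hN hNM hMle using hbad
    have hex : ∀ k, ∃ j, N k < j ∧ S.mu (x (N k)) (x j) t ≤ 1 - ε :=
      fun k => ⟨M k, hNM k, hMle k⟩
    set m : ℕ → ℕ := fun k => Nat.find (hex k) with hm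
    have hm1 : ∀ k, N k < m k := fun k => (Nat.find_spec (hex k)).1
    have hm2 : ∀ k, S.mu (x (N k)) (x (m k)) t ≤ 1 - ε := fun k => (Nat.find_spec (hex k)).2
    have hprev : ∀ k, 1 - ε ≤ S.mu (x (N k)) (x (m k - 1)) t := by
      intro k
      rcases eq_or_lt_of_le (Nat.succ_le_of_lt (hm1 k)) with h | h
      · have : m k - 1 = N k := by omega
        rw [this, (S.mu_eq_one_iff (x (N k)) (x (N k)) t ht).mpr rfl]
        linarith [hε.1]
      · have hlt : m k - 1 < m k := by omega
        have := Nat.find_min (hex k) hlt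
        push_neg at this
        exact (this (by omega)).le
    -- sequences
    set c : ℕ → ℝ := fun k => S.mu (x (N k)) (x (m k)) t with hc
    set a : ℕ → ℝ := fun k => S.mu (x (N k)) (x (N k + 1)) t with ha
    set b : ℕ → ℝ := fun k => S.mu (x (m k)) (x (m k + 1)) t with hb
    set d : ℕ → ℝ := fun k => S.mu (x (N k + 1)) (x (m k + 1)) t with hd
    set e : ℕ → ℝ := fun k => S.mu (x (m k - 1)) (x (m k)) t with he
    have hcmem : ∀ k, c k ∈ Icc (0:ℝ) 1 := fun k => S.mu_mem _ _ t ht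
    have hamem : ∀ k, a k ∈ Icc (0:ℝ) 1 := fun k => S.mu_mem _ _ t ht
    have hbmem : ∀ k, b k ∈ Icc (0:ℝ) 1 := fun k => S.mu_mem _ _ t ht
    have hdmem : ∀ k, d k ∈ Icc (0:ℝ) 1 := fun k => S.mu_mem _ _ t ht
    have hemem : ∀ k, e k ∈ Icc (0:ℝ) 1 := fun k => S.mu_mem _ _ t ht
    have hεmem : (1 - ε) ∈ Icc (0:ℝ) 1 := ⟨by linarith [hε.2], by linarith [hε.1]⟩
    have hNtop : Tendsto N atTop atTop := tendsto_atTop_mono hN tendsto_id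
    have hmtop : Tendsto m atTop atTop :=
      tendsto_atTop_mono (fun k => (hN k).trans (hm1 k).le) tendsto_id
    have hm1top : Tendsto (fun k => m k - 1) atTop atTop :=
      tendsto_atTop_mono (fun k => by have h1 := hN k; have h2 := hm1 k; simp only [id_eq]; omega) tendsto_id
    have hatend : Tendsto a atTop (𝓝 1) := (step1 t ht).comp hNtop
    have hbtend : Tendsto b atTop (𝓝 1) := (step1 t ht).comp hmtop
    have hetend : Tendsto e atTop (𝓝 1) := by
      have heq : e = (fun n => S.mu (x n) (x (n + 1)) t) ∘ (fun k => m k - 1) := by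
        funext k
        have : m k - 1 + 1 = m k := by have := hm1 k; omega
        simp only [he, Function.comp_apply, this]
      rw [heq]
      exact (step1 t ht).comp hm1top
    -- c → 1 - ε by squeeze
    have hclow : ∀ k, S.tnorm (1 - ε) (e k) ≤ c k := by
      intro k
      have htri : S.tnorm (S.mu (x (N k)) (x (m k - 1)) t) (S.mu (x (m k - 1)) (x (m k)) t)
          ≤ S.mu (x (N k)) (x (m k)) t := S.mu_na _ _ _ t ht
      refine le_trans ?_ htri
      exact S.tnorm_mono (1 - ε) hεmem (e k) (hemem k) _ (S.mu_mem _ _ t ht) (e k) (hemem k)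
        (hprev k) (le_refl _)
    have hclowt : Tendsto (fun k => S.tnorm (1 - ε) (e k)) atTop (𝓝 (1 - ε)) := by
      have h := ifms_tendsto_comp_cont2 S.tnorm_cont hεmem h01
        (fun _ => hεmem) hemem tendsto_const_nhds hetend
      rwa [S.tnorm_one (1 - ε) hεmem] at h
    have hctend : Tendsto c atTop (𝓝 (1 - ε)) :=
      tendsto_of_tendsto_of_tendsto_of_le_of_le hclowt tendsto_const_nhds hclow hm2
    -- c k ≤ ψ (d k)
    have hcd : ∀ k, c k ≤ ψ (d k) := by
      intro k
      have h := hcontr (x (N k)) (x (m k)) t ht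
      rwa [← hsucc (N k), ← hsucc (m k)] at h
    have hcd' : ∀ k, c k ≤ d k := fun k => (hcd k).trans (hψle _ (hdmem k))
    -- triangle: c k ≥ T(a k, T(d k, b' k)) with b' k = μ(x (m k + 1), x (m k))
    have htri2 : ∀ k, S.tnorm (a k) (S.tnorm (d k) (S.mu (x (m k + 1)) (x (m k)) t)) ≤ c k := by
      intro k
      have h1 : S.tnorm (S.mu (x (N k + 1)) (x (m k + 1)) t) (S.mu (x (m k + 1)) (x (m k)) t)
          ≤ S.mu (x (N k + 1)) (x (m k)) t := S.mu_na _ _ _ t ht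
      have h2 : S.tnorm (S.mu (x (N k)) (x (N k + 1)) t) (S.mu (x (N k + 1)) (x (m k)) t)
          ≤ S.mu (x (N k)) (x (m k)) t := S.mu_na _ _ _ t ht
      refine le_trans ?_ h2
      refine S.tnorm_mono (a k) (hamem k) _
        (S.tnorm_mem _ (hdmem k) _ (S.mu_mem _ _ t ht)) (a k) (hamem k) _
        (S.mu_mem _ _ t ht) (le_refl _) h1
    have hb'eq : ∀ k, S.mu (x (m k + 1)) (x (m k)) t = b k := fun k => S.mu_symm _ _ t ht
    -- Bolzano–Weierstrass on d
    obtain ⟨L, hLmem, g, hg, hdg⟩ := (isCompact_Icc (a := (0:ℝ)) (b := 1)).tendsto_subseq hdmem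
    have hgtop : Tendsto g atTop atTop := hg.tendsto_atTop
    have hcg : Tendsto (c ∘ g) atTop (𝓝 (1 - ε)) := hctend.comp hgtop
    have hag : Tendsto (a ∘ g) atTop (𝓝 1) := hatend.comp hgtop
    have hbg : Tendsto (b ∘ g) atTop (𝓝 1) := hbtend.comp hgtop
    -- L ≥ 1 - ε
    have hL1 : 1 - ε ≤ L :=
      le_of_tendsto_of_tendsto' hcg hdg (fun k => hcd' (g k))
    -- L ≤ 1 - ε
    have hL2 : L ≤ 1 - ε := by
      have hinner : Tendsto (fun k => S.tnorm (d (g k)) (b (g k))) atTop (𝓝 (S.tnorm L 1)) :=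
        ifms_tendsto_comp_cont2 S.tnorm_cont hLmem h01
          (fun k => hdmem (g k)) (fun k => hbmem (g k)) hdg hbg
      rw [S.tnorm_one L hLmem] at hinner
      have houter : Tendsto (fun k => S.tnorm (a (g k)) (S.tnorm (d (g k)) (b (g k)))) atTop
          (𝓝 (S.tnorm 1 L)) :=
        ifms_tendsto_comp_cont2 S.tnorm_cont h01 hLmem (fun k => hamem (g k))
          (fun k => S.tnorm_mem _ (hdmem (g k)) _ (hbmem (g k))) hag hinner
      rw [S.tnorm_comm 1 L, S.tnorm_one L hLmem] at houter
      refine le_of_tendsto_of_tendsto' houter hcg (fun k => ?_)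
      have h := htri2 (g k)
      rwa [hb'eq (g k)] at h
    have hLe : L = 1 - ε := le_antisymm hL2 hL1
    -- contradiction via ψ
    have hψd : Tendsto (fun k => ψ (d (g k))) atTop (𝓝 (ψ L)) :=
      ifms_tendsto_comp_cont hψ.1 hLmem (fun k => hdmem (g k)) hdg
    have hfin : 1 - ε ≤ ψ L :=
      le_of_tendsto_of_tendsto' hcg hψd (fun k => hcd (g k))
    have hLoo : L ∈ Ioo (0:ℝ) 1 := by
      rw [hLe]; exact ⟨by linarith [hε.2], by linarith [hε.1]⟩
    have := hψ.2.2.2 L hLoo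
    linarith
  -- M-Cauchy
  have hcau : MCauchy S.toIFMS x := by
    intro ε hε t ht
    obtain ⟨n₀, h⟩ := cauchy_mu ε hε t ht
    refine ⟨n₀, fun p n hp hn => ⟨h p n hp hn, ?_⟩⟩
    have h1 := S.sum_le_one (x n) (x p) t ht
    have h2 := h p n hp hn
    linarith
  obtain ⟨y, hy⟩ := hcompl x hcau
  have hfy : f y = y := by
    have key1 : S.mu y (f y) 1 = 1 := by
      have ht : (0:ℝ) < 1 := one_pos
      have h1 : Tendsto (fun n => S.mu (x (n + 1)) (f y) 1) atTop (𝓝 1) := by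
        have hlow : ∀ n, S.mu (x n) y 1 ≤ S.mu (x (n + 1)) (f y) 1 := by
          intro n
          have h := hmono_mu (x n) y 1 ht
          rwa [← hsucc n] at h
        exact tendsto_of_tendsto_of_tendsto_of_le_of_le ((hy 1 ht).1) tendsto_const_nhds
          hlow (fun n => (S.mu_mem _ _ 1 ht).2)
      have h2 : ∀ n, S.tnorm (S.mu y (x (n + 1)) 1) (S.mu (x (n + 1)) (f y) 1)
          ≤ S.mu y (f y) 1 := fun n => S.mu_na y (x (n + 1)) (f y) 1 ht
      have heq : (fun n => S.mu y (x (n + 1)) 1) = (fun n => S.mu (x (n + 1)) y 1) :=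
        funext fun n => S.mu_symm y (x (n + 1)) 1 ht
      have h3 : Tendsto (fun n => S.tnorm (S.mu y (x (n + 1)) 1) (S.mu (x (n + 1)) (f y) 1))
          atTop (𝓝 (S.tnorm 1 1)) := by
        refine ifms_tendsto_comp_cont2 S.tnorm_cont h01 h01
          (fun n => S.mu_mem _ _ 1 ht) (fun n => S.mu_mem _ _ 1 ht) ?_ h1
        rw [heq]
        exact (hy 1 ht).1.comp (tendsto_add_atTop_nat 1)
      rw [S.tnorm_one 1 h01] at h3
      have h4 : 1 ≤ S.mu y (f y) 1 := le_of_tendsto_of_tendsto' h3 tendsto_const_nhds h2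
      exact le_antisymm (S.mu_mem _ _ 1 ht).2 h4
    exact ((S.mu_eq_one_iff y (f y) 1 one_pos).mp key1).symm
  refine ⟨y, hfy, fun z hz => ?_⟩
  have hzy : S.mu z y 1 = 1 := by
    by_contra hne
    have hmem := S.mu_mem z y 1 one_pos
    have hlt : S.mu z y 1 < 1 := lt_of_le_of_ne hmem.2 hne
    have hpos := S.mu_pos z y 1 one_pos
    have h := hcontr z y 1 one_pos
    rw [hz, hfy] at h
    have := hψ.2.2.2 (S.mu z y 1) ⟨hpos, hlt⟩
    linarith
  exact (S.mu_eq_one_iff z y 1 one_pos).mp hzy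
end

section
/- Let (X, μ, ν, ∗, ◇) be an intuitionistic fuzzy metric space, let ψ ∈ Ψ and φ ∈ Φ, let f : X → X be an intuitionistic fuzzy ψ-φ-contractive mapping, let x ∈ X and set x_n = f^n(x) for n ∈ ℕ. Then for every t > 0, lim_{n→∞} μ(x_n, x_{n+1}, t) = 1 and lim_{n→∞} ν(x_n, x_{n+1}, t) = 0. -/
open Set Filter Topology

theorem ifms_orbit_limits {X : Type*} (S : IFMS X) (ψ φ : ℝ → ℝ)
    (hψ : MemPsi ψ) (hφ : MemPhi φ) (f : X → X)
    (hf : IsPsiPhiContractive S ψ φ f) (x : X) :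
    ∀ t > (0:ℝ),
      Tendsto (fun n => S.mu (f^[n] x) (f^[n+1] x) t) atTop (𝓝 1) ∧
      Tendsto (fun n => S.nu (f^[n] x) (f^[n+1] x) t) atTop (𝓝 0) := by
  intro t ht
  set a : ℕ → ℝ := fun n => S.mu (f^[n] x) (f^[n+1] x) t with ha
  set b : ℕ → ℝ := fun n => S.nu (f^[n] x) (f^[n+1] x) t with hb
  have ham : ∀ n, a n ∈ Icc (0:ℝ) 1 := fun n => S.mu_mem _ _ t ht
  have hbm : ∀ n, b n ∈ Icc (0:ℝ) 1 := fun n => S.nu_mem _ _ t ht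
  have hblt : ∀ n, b n < 1 := fun n => S.nu_lt_one _ _ t ht
  -- ψ a ≤ a on [0,1]
  have hψ0 : ψ 0 ≤ 0 := by
    by_contra h
    push_neg at h
    set c := min (ψ 0) (1/2) with hc
    have hc0 : 0 < c := lt_min h (by norm_num)
    have hc1 : c < 1 := lt_of_le_of_lt (min_le_right _ _) (by norm_num)
    have hcm : c ∈ Icc (0:ℝ) 1 := ⟨hc0.le, hc1.le⟩
    have h1 : ψ 0 ≤ ψ c := hψ.2.2.1 0 ⟨le_refl 0, zero_le_one⟩ c hcm hc0.le
    have h2 : ψ c < c := hψ.2.2.2 c ⟨hc0, hc1⟩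
    have h3 : c ≤ ψ 0 := min_le_left _ _
    linarith
  have hψle : ∀ u ∈ Icc (0:ℝ) 1, ψ u ≤ u := by
    intro u hu
    rcases eq_or_lt_of_le hu.1 with h0 | h0
    · rw [← h0]; exact hψ0
    rcases eq_or_lt_of_le hu.2 with h1 | h1
    · subst h1; exact (hψ.2.1 1 hu).2
    · exact (hψ.2.2.2 u ⟨h0, h1⟩).le
  -- key contractive inequality
  have key : ∀ n, a n ≤ ψ (a (n+1)) := by
    intro n
    have h := (hf (f^[n] x) (f^[n+1] x) t ht).1 (S.mu_pos _ _ t ht)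
    simpa [ha, Function.iterate_succ_apply'] using h
  have hmono : Monotone a := by
    apply monotone_nat_of_le_succ
    intro n
    exact (key n).trans (hψle _ (ham (n+1)))
  have hbdd : BddAbove (Set.range a) := ⟨1, by rintro y ⟨n, rfl⟩; exact (ham n).2⟩
  have hL : Tendsto a atTop (𝓝 (⨆ n, a n)) := tendsto_atTop_ciSup hmono hbdd
  set L := ⨆ n, a n with hLdef
  have hLmem : L ∈ Icc (0:ℝ) 1 := by
    constructor
    · exact le_trans (ham 0).1 (le_ciSup hbdd 0)
    · exact ciSup_le fun n => (ham n).2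
  have hL0 : 0 < L := lt_of_lt_of_le (S.mu_pos _ _ t ht) (le_ciSup hbdd 0)
  have hL1 : Tendsto (fun n => a (n+1)) atTop (𝓝 L) := hL.comp (tendsto_add_atTop_nat 1)
  have hψL : Tendsto (fun n => ψ (a (n+1))) atTop (𝓝 (ψ L)) := by
    apply ((hψ.1 L hLmem).tendsto).comp
    rw [tendsto_nhdsWithin_iff]
    exact ⟨hL1, Filter.Eventually.of_forall fun n => ham (n+1)⟩
  have hLψ : L ≤ ψ L := le_of_tendsto_of_tendsto' hL hψL key
  have hLeq : L = 1 := by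
    by_contra h
    have : L < 1 := lt_of_le_of_ne hLmem.2 h
    exact absurd hLψ (not_le.mpr (hψ.2.2.2 L ⟨hL0, this⟩))
  -- φ side
  have hφge : ∀ u, 0 ≤ u → u < 1 → u ≤ φ u := by
    intro u h0 h1
    rcases eq_or_lt_of_le h0 with h | h
    · rw [← h]; exact (hφ.2.1 0 ⟨le_refl 0, zero_le_one⟩).1
    · exact (hφ.2.2.2 u ⟨h, h1⟩).le
  have key' : ∀ n, φ (b (n+1)) ≤ b n := by
    intro n
    have h := (hf (f^[n] x) (f^[n+1] x) t ht).2 (S.nu_lt_one _ _ t ht)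
    simpa [hb, Function.iterate_succ_apply'] using h
  have hanti : Antitone b := by
    apply antitone_nat_of_succ_le
    intro n
    exact (hφge _ (hbm (n+1)).1 (hblt (n+1))).trans (key' n)
  have hbdd' : BddBelow (Set.range b) := ⟨0, by rintro y ⟨n, rfl⟩; exact (hbm n).1⟩
  have hM : Tendsto b atTop (𝓝 (⨅ n, b n)) := tendsto_atTop_ciInf hanti hbdd'
  set M := ⨅ n, b n with hMdef
  have hMmem : M ∈ Icc (0:ℝ) 1 := by
    constructor
    · exact le_ciInf fun n => (hbm n).1
    · exact le_trans (ciInf_le hbdd' 0) (hbm 0).2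
  have hMlt1 : M < 1 := lt_of_le_of_lt (ciInf_le hbdd' 0) (hblt 0)
  have hM1 : Tendsto (fun n => b (n+1)) atTop (𝓝 M) := hM.comp (tendsto_add_atTop_nat 1)
  have hφM : Tendsto (fun n => φ (b (n+1))) atTop (𝓝 (φ M)) := by
    apply ((hφ.1 M hMmem).tendsto).comp
    rw [tendsto_nhdsWithin_iff]
    exact ⟨hM1, Filter.Eventually.of_forall fun n => hbm (n+1)⟩
  have hMφ : φ M ≤ M := le_of_tendsto_of_tendsto' hφM hM key'
  have hMeq : M = 0 := by
    by_contra h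
    have h0 : 0 < M := lt_of_le_of_ne hMmem.1 (Ne.symm h)
    exact absurd hMφ (not_le.mpr (hφ.2.2.2 M ⟨h0, hMlt1⟩))
  exact ⟨hLeq ▸ hL, hMeq ▸ hM⟩
end

section
/- Let (X, μ, ν, ∗, ◇) be a non-Archimedean intuitionistic fuzzy metric space, let ψ ∈ Ψ and φ ∈ Φ, let f : X → X be an intuitionistic fuzzy ψ-φ-contractive mapping, and let x ∈ X. Then the orbit sequence x_n = f^n(x) is an M-Cauchy sequence. -/
open Set Filter Topology

private lemma ifms_tendsto_comp₁ {g : ℝ → ℝ} (hg : ContinuousOn g (Icc (0:ℝ) 1))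
    {u : ℕ → ℝ} {U : ℝ} (hu : Tendsto u atTop (𝓝 U)) (hum : ∀ n, u n ∈ Icc (0:ℝ) 1)
    (hU : U ∈ Icc (0:ℝ) 1) : Tendsto (fun n => g (u n)) atTop (𝓝 (g U)) :=
  (hg U hU).tendsto.comp
    (tendsto_nhdsWithin_of_tendsto_nhds_of_eventually_within u hu (Eventually.of_forall hum))

private lemma ifms_tendsto_comp₂ {T : ℝ → ℝ → ℝ}
    (hT : ContinuousOn (fun p : ℝ × ℝ => T p.1 p.2) (Icc (0:ℝ) 1 ×ˢ Icc (0:ℝ) 1))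
    {u v : ℕ → ℝ} {U V : ℝ} (hu : Tendsto u atTop (𝓝 U)) (hv : Tendsto v atTop (𝓝 V))
    (hum : ∀ n, u n ∈ Icc (0:ℝ) 1) (hvm : ∀ n, v n ∈ Icc (0:ℝ) 1)
    (hU : U ∈ Icc (0:ℝ) 1) (hV : V ∈ Icc (0:ℝ) 1) :
    Tendsto (fun n => T (u n) (v n)) atTop (𝓝 (T U V)) :=
  (hT (U, V) ⟨hU, hV⟩).tendsto.comp
    (tendsto_nhdsWithin_of_tendsto_nhds_of_eventually_within _ (hu.prodMk_nhds hv)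
      (Eventually.of_forall fun n => ⟨hum n, hvm n⟩))

theorem ifms_orbit_mcauchy {X : Type*} (S : NAIFMS X) (ψ φ : ℝ → ℝ)
    (hψ : MemPsi ψ) (hφ : MemPhi φ) (f : X → X)
    (hf : IsPsiPhiContractive S.toIFMS ψ φ f) (x : X) :
    MCauchy S.toIFMS (fun n => f^[n] x) := by
  classical
  obtain ⟨hψc, hψmem, hψmono, hψlt⟩ := hψ
  set y : ℕ → X := fun n => f^[n] x with hy
  intro ε hε t ht
  have one_mem : (1:ℝ) ∈ Icc (0:ℝ) 1 := ⟨zero_le_one, le_rfl⟩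
  have hmem : ∀ n m : ℕ, S.mu (y n) (y m) t ∈ Icc (0:ℝ) 1 := fun n m => S.mu_mem _ _ t ht
  have hψle : ∀ b : ℝ, 0 < b → b ≤ 1 → ψ b ≤ b := by
    intro b h0 h1
    rcases eq_or_lt_of_le h1 with h | h
    · rw [h]; exact (hψmem 1 one_mem).2
    · exact le_of_lt (hψlt b ⟨h0, h⟩)
  have hfy : ∀ n, f (y n) = y (n+1) := fun n => (Function.iterate_succ_apply' f n x).symm
  have hcontr : ∀ n m : ℕ, S.mu (y n) (y m) t ≤ ψ (S.mu (y (n+1)) (y (m+1)) t) := by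
    intro n m
    have h := (hf (y n) (y m) t ht).1 (S.mu_pos _ _ t ht)
    rwa [hfy, hfy] at h
  set a : ℕ → ℝ := fun n => S.mu (y n) (y (n+1)) t with haa
  have hamem : ∀ n, a n ∈ Icc (0:ℝ) 1 := fun n => hmem _ _
  have hapos : ∀ n, 0 < a n := fun n => S.mu_pos _ _ t ht
  have hstep : ∀ n, a n ≤ ψ (a (n+1)) := fun n => hcontr n (n+1)
  have hmono : Monotone a := monotone_nat_of_le_succ fun n =>
    (hstep n).trans (hψle _ (hapos (n+1)) (hamem (n+1)).2)
  have hbdd : BddAbove (Set.range a) := ⟨1, by rintro _ ⟨n, rfl⟩; exact (hamem n).2⟩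
  set L : ℝ := ⨆ n, a n with hLdef
  have haL : Tendsto a atTop (𝓝 L) := tendsto_atTop_ciSup hmono hbdd
  have hL1 : L ≤ 1 := ciSup_le fun n => (hamem n).2
  have hL0 : 0 < L := lt_of_lt_of_le (hapos 0) (le_ciSup hbdd 0)
  have hLone : L = 1 := by
    rcases eq_or_lt_of_le hL1 with h | h
    · exact h
    · exfalso
      have h2 : Tendsto (fun n => a (n+1)) atTop (𝓝 L) := haL.comp (tendsto_add_atTop_nat 1)
      have h3 : Tendsto (fun n => ψ (a (n+1))) atTop (𝓝 (ψ L)) :=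
        ifms_tendsto_comp₁ hψc h2 (fun n => hamem (n+1)) ⟨le_of_lt hL0, hL1⟩
      have h4 : L ≤ ψ L := le_of_tendsto_of_tendsto' haL h3 hstep
      exact absurd (lt_of_le_of_lt h4 (hψlt L ⟨hL0, h⟩)) (lt_irrefl L)
  rw [hLone] at haL
  by_contra hcon
  push_neg at hcon
  have key : ∀ k : ℕ, ∃ n, k ≤ n ∧ ∃ m, n < m ∧ S.mu (y n) (y m) t ≤ 1 - ε := by
    intro k
    obtain ⟨m, n, hm, hn, hmn⟩ := hcon k
    have hle : S.mu (y n) (y m) t ≤ 1 - ε := by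
      by_contra h
      push_neg at h
      have hν := hmn h
      have hsum := S.sum_le_one (y n) (y m) t ht
      linarith
    have hne : n ≠ m := by
      intro h
      rw [h, (S.mu_eq_one_iff (y m) (y m) t ht).mpr rfl] at hle
      linarith [hε.1]
    rcases lt_or_gt_of_ne hne with h | h
    · exact ⟨n, hn, m, h, hle⟩
    · exact ⟨m, hm, n, h, by rwa [S.mu_symm _ _ t ht]⟩
  choose nn hnnk hex using key
  set mm : ℕ → ℕ := fun k => Nat.find (hex k) with hmmdef
  have hspec : ∀ k, nn k < mm k ∧ S.mu (y (nn k)) (y (mm k)) t ≤ 1 - ε :=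
    fun k => Nat.find_spec (hex k)
  have hmin : ∀ k j, nn k < j → j < mm k → 1 - ε < S.mu (y (nn k)) (y j) t := by
    intro k j h1 h2
    by_contra h
    exact Nat.find_min (hex k) h2 ⟨h1, not_lt.mp h⟩
  have hmmpos : ∀ k, 0 < mm k := fun k => lt_of_le_of_lt (Nat.zero_le _) (hspec k).1
  have hprev_succ : ∀ k, mm k - 1 + 1 = mm k := fun k => Nat.succ_pred_eq_of_pos (hmmpos k)
  have hprev_ge : ∀ k, nn k ≤ mm k - 1 := fun k => Nat.le_sub_one_of_lt (hspec k).1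
  have hprev : ∀ k, 1 - ε < S.mu (y (nn k)) (y (mm k - 1)) t := by
    intro k
    rcases eq_or_lt_of_le (hprev_ge k) with h | h
    · rw [← h, (S.mu_eq_one_iff _ _ t ht).mpr rfl]; linarith [hε.1]
    · exact hmin k _ h (Nat.sub_lt (hmmpos k) one_pos)
  have hnn_top : Tendsto nn atTop atTop := tendsto_atTop_mono hnnk tendsto_id
  have hmm_top : Tendsto mm atTop atTop :=
    tendsto_atTop_mono (fun k => (hnnk k).trans (le_of_lt (hspec k).1)) tendsto_id
  have hprev_top : Tendsto (fun k => mm k - 1) atTop atTop :=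
    tendsto_atTop_mono (fun k => (hnnk k).trans (hprev_ge k)) tendsto_id
  have h_ann : Tendsto (fun k => a (nn k)) atTop (𝓝 1) := haL.comp hnn_top
  have h_amm : Tendsto (fun k => a (mm k)) atTop (𝓝 1) := haL.comp hmm_top
  have h_aprev : Tendsto (fun k => a (mm k - 1)) atTop (𝓝 1) := haL.comp hprev_top
  set c : ℕ → ℝ := fun k => S.mu (y (nn k)) (y (mm k)) t with hcdef
  have hcmem : ∀ k, c k ∈ Icc (0:ℝ) 1 := fun k => hmem _ _
  have h1ε : (1:ℝ) - ε ∈ Icc (0:ℝ) 1 := ⟨by linarith [hε.2], by linarith [hε.1]⟩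
  have haprev_eq : ∀ k, a (mm k - 1) = S.mu (y (mm k - 1)) (y (mm k)) t := by
    intro k
    simp only [haa]
    rw [hprev_succ k]
  have hclow : ∀ k, S.tnorm (1 - ε) (a (mm k - 1)) ≤ c k := by
    intro k
    have htri := S.mu_na (y (nn k)) (y (mm k - 1)) (y (mm k)) t ht
    calc S.tnorm (1 - ε) (a (mm k - 1))
        = S.tnorm (1 - ε) (S.mu (y (mm k - 1)) (y (mm k)) t) := by rw [haprev_eq k]
      _ ≤ S.tnorm (S.mu (y (nn k)) (y (mm k - 1)) t) (S.mu (y (mm k - 1)) (y (mm k)) t) :=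
          S.tnorm_mono _ h1ε _ (hmem _ _) _ (hmem _ _) _ (hmem _ _)
            (le_of_lt (hprev k)) le_rfl
      _ ≤ c k := htri
  have hlow : Tendsto (fun k => S.tnorm (1 - ε) (a (mm k - 1))) atTop (𝓝 (S.tnorm (1 - ε) 1)) :=
    ifms_tendsto_comp₂ S.tnorm_cont tendsto_const_nhds h_aprev (fun _ => h1ε)
      (fun k => hamem _) h1ε one_mem
  rw [S.tnorm_one _ h1ε] at hlow
  have hclim : Tendsto c atTop (𝓝 (1 - ε)) :=
    tendsto_of_tendsto_of_tendsto_of_le_of_le hlow tendsto_const_nhds hclow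
      (fun k => (hspec k).2)
  set d : ℕ → ℝ := fun k => S.mu (y (nn k + 1)) (y (mm k + 1)) t with hddef
  have hdmem : ∀ k, d k ∈ Icc (0:ℝ) 1 := fun k => hmem _ _
  have hcd : ∀ k, c k ≤ ψ (d k) := fun k => hcontr (nn k) (mm k)
  have hann_symm : ∀ k, a (nn k) = S.mu (y (nn k + 1)) (y (nn k)) t :=
    fun k => S.mu_symm _ _ t ht
  have hamm_symm : ∀ k, a (mm k) = S.mu (y (mm k + 1)) (y (mm k)) t :=
    fun k => S.mu_symm _ _ t ht
  have hd_low : ∀ k, S.tnorm (a (nn k)) (S.tnorm (c k) (a (mm k))) ≤ d k := by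
    intro k
    have t1 := S.mu_na (y (nn k + 1)) (y (nn k)) (y (mm k + 1)) t ht
    have t2 := S.mu_na (y (nn k)) (y (mm k)) (y (mm k + 1)) t ht
    calc S.tnorm (a (nn k)) (S.tnorm (c k) (a (mm k)))
        ≤ S.tnorm (a (nn k)) (S.mu (y (nn k)) (y (mm k + 1)) t) :=
          S.tnorm_mono _ (hamem _) _ (S.tnorm_mem _ (hcmem k) _ (hamem _)) _ (hamem _)
            _ (hmem _ _) le_rfl t2
      _ = S.tnorm (S.mu (y (nn k + 1)) (y (nn k)) t) (S.mu (y (nn k)) (y (mm k + 1)) t) := by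
          rw [hann_symm k]
      _ ≤ d k := t1
  have hc_up : ∀ k, S.tnorm (a (nn k)) (S.tnorm (d k) (a (mm k))) ≤ c k := by
    intro k
    have t1 := S.mu_na (y (nn k)) (y (nn k + 1)) (y (mm k)) t ht
    have t2 := S.mu_na (y (nn k + 1)) (y (mm k + 1)) (y (mm k)) t ht
    have t2' : S.tnorm (d k) (a (mm k)) ≤ S.mu (y (nn k + 1)) (y (mm k)) t := by
      rw [hamm_symm k]; exact t2
    calc S.tnorm (a (nn k)) (S.tnorm (d k) (a (mm k)))
        ≤ S.tnorm (a (nn k)) (S.mu (y (nn k + 1)) (y (mm k)) t) :=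
          S.tnorm_mono _ (hamem _) _ (S.tnorm_mem _ (hdmem k) _ (hamem _)) _ (hamem _)
            _ (hmem _ _) le_rfl t2'
      _ ≤ c k := t1
  obtain ⟨M, hM, g, hg, hdg⟩ := (isCompact_Icc (a := (0:ℝ)) (b := 1)).tendsto_subseq hdmem
  have hgtop : Tendsto g atTop atTop := hg.tendsto_atTop
  have hcg : Tendsto (fun k => c (g k)) atTop (𝓝 (1 - ε)) := hclim.comp hgtop
  have hanng : Tendsto (fun k => a (nn (g k))) atTop (𝓝 1) := h_ann.comp hgtop
  have hammg : Tendsto (fun k => a (mm (g k))) atTop (𝓝 1) := h_amm.comp hgtop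
  have hdg' : Tendsto (fun k => d (g k)) atTop (𝓝 M) := hdg
  have hlow2 : Tendsto (fun k => S.tnorm (a (nn (g k))) (S.tnorm (c (g k)) (a (mm (g k)))))
      atTop (𝓝 (S.tnorm 1 (S.tnorm (1 - ε) 1))) :=
    ifms_tendsto_comp₂ S.tnorm_cont hanng
      (ifms_tendsto_comp₂ S.tnorm_cont hcg hammg (fun k => hcmem _) (fun k => hamem _)
        h1ε one_mem)
      (fun k => hamem _) (fun k => S.tnorm_mem _ (hcmem _) _ (hamem _)) one_mem
      (S.tnorm_mem _ h1ε _ one_mem)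
  have hsimp1 : S.tnorm 1 (S.tnorm (1 - ε) 1) = 1 - ε := by
    rw [S.tnorm_one _ h1ε, S.tnorm_comm, S.tnorm_one _ h1ε]
  rw [hsimp1] at hlow2
  have hM_ge : 1 - ε ≤ M :=
    le_of_tendsto_of_tendsto' hlow2 hdg' (fun k => hd_low (g k))
  have hup2 : Tendsto (fun k => S.tnorm (a (nn (g k))) (S.tnorm (d (g k)) (a (mm (g k)))))
      atTop (𝓝 (S.tnorm 1 (S.tnorm M 1))) :=
    ifms_tendsto_comp₂ S.tnorm_cont hanng
      (ifms_tendsto_comp₂ S.tnorm_cont hdg' hammg (fun k => hdmem _) (fun k => hamem _)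
        hM one_mem)
      (fun k => hamem _) (fun k => S.tnorm_mem _ (hdmem _) _ (hamem _)) one_mem
      (S.tnorm_mem _ hM _ one_mem)
  have hsimp2 : S.tnorm 1 (S.tnorm M 1) = M := by
    rw [S.tnorm_one _ hM, S.tnorm_comm, S.tnorm_one _ hM]
  rw [hsimp2] at hup2
  have hM_le : M ≤ 1 - ε := le_of_tendsto_of_tendsto' hup2 hcg (fun k => hc_up (g k))
  have hMe : M = 1 - ε := le_antisymm hM_le hM_ge
  have hψd : Tendsto (fun k => ψ (d (g k))) atTop (𝓝 (ψ M)) :=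
    ifms_tendsto_comp₁ hψc hdg' (fun k => hdmem _) hM
  have hle2 : 1 - ε ≤ ψ M := le_of_tendsto_of_tendsto' hcg hψd (fun k => hcd (g k))
  have hlt : ψ M < M := hψlt M ⟨by rw [hMe]; linarith [hε.2], by rw [hMe]; linarith [hε.1]⟩
  rw [hMe] at hlt hle2
  linarith
end

section
/- Let (X, μ, ν, ∗, ◇) be an intuitionistic fuzzy metric space, let ψ ∈ Ψ and φ ∈ Φ, let f : X → X be an intuitionistic fuzzy ψ-φ-contractive mapping, let x ∈ X and set x_n = f^n(x). If x_n ≠ x_{n+1} for every n ∈ ℕ, then the points x_n are pairwise distinct, i.e. x_m ≠ x_n whenever m ≠ n. -/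
open Set Filter Topology

theorem ifms_orbit_pairwise_distinct {X : Type*} (S : IFMS X) (ψ φ : ℝ → ℝ)
    (hψ : MemPsi ψ) (hφ : MemPhi φ) (f : X → X)
    (hf : IsPsiPhiContractive S ψ φ f) (x : X)
    (h : ∀ n : ℕ, f^[n] x ≠ f^[n+1] x) :
    ∀ m n : ℕ, m ≠ n → f^[m] x ≠ f^[n] x := by
  have key : ∀ j : ℕ, S.mu (f^[j] x) (f^[j+1] x) 1 < S.mu (f^[j+1] x) (f^[j+2] x) 1 := by
    intro j
    have hmem := S.mu_mem (f^[j+1] x) (f^[j+2] x) 1 one_pos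
    have hpos := S.mu_pos (f^[j+1] x) (f^[j+2] x) 1 one_pos
    have hne : S.mu (f^[j+1] x) (f^[j+2] x) 1 ≠ 1 := fun he =>
      h (j+1) ((S.mu_eq_one_iff _ _ 1 one_pos).mp he)
    have hlt1 : S.mu (f^[j+1] x) (f^[j+2] x) 1 < 1 := lt_of_le_of_ne hmem.2 hne
    have hc := (hf (f^[j] x) (f^[j+1] x) 1 one_pos).1 (S.mu_pos _ _ 1 one_pos)
    rw [← Function.iterate_succ_apply' f j x,
        ← Function.iterate_succ_apply' f (j+1) x] at hc
    calc S.mu (f^[j] x) (f^[j+1] x) 1 ≤ ψ (S.mu (f^[j+1] x) (f^[j+2] x) 1) := hc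
      _ < S.mu (f^[j+1] x) (f^[j+2] x) 1 := hψ.2.2.2 _ ⟨hpos, hlt1⟩
  have mono : StrictMono (fun j => S.mu (f^[j] x) (f^[j+1] x) 1) :=
    strictMono_nat_of_lt_succ key
  have main : ∀ m n : ℕ, m < n → f^[m] x ≠ f^[n] x := by
    intro m n hlt heq
    have heq' : S.mu (f^[m] x) (f^[m+1] x) 1 = S.mu (f^[n] x) (f^[n+1] x) 1 := by
      rw [Function.iterate_succ_apply' f m, Function.iterate_succ_apply' f n, heq]
    exact absurd heq' (ne_of_lt (mono hlt))
  intro m n hmn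
  rcases lt_or_gt_of_ne hmn with hlt | hlt
  · exact main m n hlt
  · exact fun he => main n m hlt he.symm
end
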